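/- arXiv:1807.06097 — 3 statements merged into one kernel-verified Lean document; each statement's English description precedes it below -/
import Mathlib

section
/- Let Q be a nonempty dense linear order without endpoints and let D₁, D₂ ⊆ Q^n be definable sets. If there exists a definable bijection from D₁ onto D₂, then there exists a strictly decreasing finite tuple a_1 > a_2 > ⋯ > a_m in Q such that D₁ and D₂ are both definable with parameters among {a_1,…,a_m} and, for every vector v ∈ ℕ^{m+1}, the characteristics χ_v(D₁) and χ_v(D₂) are equal. -/
/-!
Membership in a set definable over finitely many parameters `A` depends only on the order type
over `A`: by a back-and-forth argument through the formula, any two tuples of the same order type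
over `A` satisfy the same formulas, partial isomorphisms of a dense order without endpoints being
extendable by any point. If the graph of `f` is definable over `A`, then every coordinate of `f x`
is a coordinate of `x` or lies in `A`, for otherwise moving it slightly without changing its cut
would give a second point of the graph over `x`; symmetrically when `f` is injective. Hence a
definable bijection preserves order types over `A` in both directions as well as the coordinate
values outside `A`, so it maps the classes counted by `χ_v(D₁)` bijectively onto those counted
by `χ_v(D₂)`.
-/

open FirstOrder FirstOrder.Language

attribute [local instance] FirstOrder.Language.orderStructure

/-- A subset of `Q^n` is definable if it is defined by a first-order formula in the
language of orders with finitely many parameters from `Q`. -/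
def DLODefinable {Q : Type*} [LinearOrder Q] {n : ℕ} (s : Set (Fin n → Q)) : Prop :=
  ∃ A : Set Q, A.Finite ∧ A.Definable Language.order s

/-- The graph of `f` restricted to `D₁`, as a subset of `Q^(n+m)`. -/
def graphOn {Q : Type*} {n m : ℕ} (D₁ : Set (Fin n → Q))
    (f : (Fin n → Q) → (Fin m → Q)) : Set (Fin (n + m) → Q) :=
  {z | ∃ x ∈ D₁, z = Fin.append x (f x)}

/-- A definable bijection from `D₁ ⊆ Q^n` onto `D₂ ⊆ Q^m`: a bijection from `D₁` onto `D₂`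
whose graph is a definable subset of `Q^(n+m)`. -/
def DefBij {Q : Type*} [LinearOrder Q] {n m : ℕ} (D₁ : Set (Fin n → Q))
    (D₂ : Set (Fin m → Q)) : Prop :=
  ∃ f : (Fin n → Q) → (Fin m → Q), Set.BijOn f D₁ D₂ ∧ DLODefinable (graphOn D₁ f)

/-- `x, y ∈ Q^n` have the same order type over the tuple `a`. -/
def SameOrderType {Q : Type*} [LinearOrder Q] {m n : ℕ} (a : Fin m → Q)
    (x y : Fin n → Q) : Prop :=
  (∀ i j, x i < x j ↔ y i < y j) ∧
    ∀ i k, (x i < a k ↔ y i < a k) ∧ (a k < x i ↔ a k < y i)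

/-- Membership in the `g`-th gap determined by the strictly decreasing tuple `a`:
`G_0 = (a 0, ∞)`, `G_g = (a g, a (g-1))` for `0 < g < m`, and `G_m = (-∞, a (m-1))`. -/
def InGap {Q : Type*} [LinearOrder Q] {m : ℕ} (a : Fin m → Q) (g : Fin (m + 1)) (q : Q) :
    Prop :=
  (∀ h : (g : ℕ) < m, a ⟨g, h⟩ < q) ∧ ∀ j : Fin m, (j : ℕ) + 1 = (g : ℕ) → q < a j

/-- The number of distinct values among the coordinates of `x` lying in the `g`-th gap. -/
noncomputable def gapCount {Q : Type*} [LinearOrder Q] {m n : ℕ} (a : Fin m → Q)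
    (x : Fin n → Q) (g : Fin (m + 1)) : ℕ :=
  Set.ncard {q : Q | (∃ i, x i = q) ∧ InGap a g q}

/-- The characteristic `χ_v(D)`: the number of equivalence classes of points of `D` under
"same order type over `a`" all of whose members have gap-count vector `v`. -/
noncomputable def chi {Q : Type*} [LinearOrder Q] {m n : ℕ} (a : Fin m → Q)
    (v : Fin (m + 1) → ℕ) (D : Set (Fin n → Q)) : ℕ :=
  Set.ncard {C : Set (Fin n → Q) |
    ∃ x ∈ D, C = {y ∈ D | SameOrderType a x y} ∧ ∀ g, gapCount a x g = v g}


open Set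

section PartialIso

variable {Q : Type*} [LinearOrder Q]

lemma cmp_eq_cmp_of_lt_iff_lt {x y x' y' : Q} (h₁ : x < y ↔ x' < y') (h₂ : y < x ↔ y' < x') :
    cmp x y = cmp x' y' := by
  simp only [cmp, cmpUsing, h₁, h₂]

def IsPartialIso (P : Set (Q × Q)) : Prop :=
  ∀ p ∈ P, ∀ q ∈ P, cmp p.1 q.1 = cmp p.2 q.2

namespace IsPartialIso

variable {P P' : Set (Q × Q)}

lemma mono (hP : IsPartialIso P) (h : P' ⊆ P) : IsPartialIso P' :=
  fun p hp q hq => hP p (h hp) q (h hq)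

lemma preimage_swap (hP : IsPartialIso P) : IsPartialIso (Prod.swap ⁻¹' P) :=
  fun _ hp _ hq => (hP _ hp _ hq).symm

lemma snd_eq {p q q' : Q} (hP : IsPartialIso P) (h : (p, q) ∈ P) (h' : (p, q') ∈ P) : q = q' :=
  (eq_iff_eq_of_cmp_eq_cmp (hP _ h _ h')).1 rfl

lemma insert_of_forall_cmp_eq (hP : IsPartialIso P) {d b : Q}
    (h : ∀ p ∈ P, cmp p.1 d = cmp p.2 b) : IsPartialIso (insert (d, b) P) := by
  rintro p (rfl | hp) q (rfl | hq)
  · simp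
  · exact cmp_eq_cmp_symm.1 (h q hq)
  · exact h p hp
  · exact hP p hp q hq

variable [DenselyOrdered Q] [NoMinOrder Q] [NoMaxOrder Q]

lemma exists_insert (hP : IsPartialIso P) (hfin : P.Finite) (d : Q) :
    ∃ b, IsPartialIso (insert (d, b) P) := by
  have : Nonempty Q := ⟨d⟩
  obtain ⟨b, hb⟩ := Order.PartialIso.exists_across
    ⟨hfin.toFinset, fun p hp q hq => hP p (by simpa using hp) q (by simpa using hq)⟩ d
  exact ⟨b, hP.insert_of_forall_cmp_eq fun p hp => hb p (by simpa using hp)⟩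

lemma exists_insert_fst (hP : IsPartialIso P) (hfin : P.Finite) (b : Q) :
    ∃ d, IsPartialIso (insert (d, b) P) := by
  obtain ⟨d, hd⟩ := hP.preimage_swap.exists_insert (hfin.preimage Prod.swap_injective.injOn) b
  refine ⟨d, hd.preimage_swap.mono ?_⟩
  rintro p (rfl | hp)
  · exact Or.inl rfl
  · exact Or.inr (by simpa using hp)

end IsPartialIso

end PartialIso

namespace FirstOrder.Language

lemma Term.exists_eq_var {L : Language} [L.IsRelational] {γ : Type*} (t : L.Term γ) :
    ∃ s, t = var s := by
  cases t with
  | var s => exact ⟨s, rfl⟩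
  | func f _ => exact isEmptyElim f

variable {Q : Type*} [LinearOrder Q] [DenselyOrdered Q] [NoMinOrder Q] [NoMaxOrder Q]

/-- Back and forth: at each quantifier the finite partial isomorphism extends by one point on
either side, since `Q` is dense without endpoints. -/
theorem BoundedFormula.realize_iff_of_isPartialIso {β : Type*} {l : ℕ}
    (φ : Language.order.BoundedFormula β l) {P : Set (Q × Q)} (hfin : P.Finite)
    (hP : IsPartialIso P) {v w : β → Q} {xs ys : Fin l → Q}
    (hmem : ∀ s, (Sum.elim v xs s, Sum.elim w ys s) ∈ P) :
    φ.Realize v xs ↔ φ.Realize w ys := by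
  induction φ generalizing P with
  | falsum => exact Iff.rfl
  | equal t₁ t₂ =>
    obtain ⟨s₁, rfl⟩ := t₁.exists_eq_var
    obtain ⟨s₂, rfl⟩ := t₂.exists_eq_var
    exact eq_iff_eq_of_cmp_eq_cmp (hP _ (hmem s₁) _ (hmem s₂))
  | rel R ts =>
    cases R
    obtain ⟨s₁, h₁⟩ := (ts 0).exists_eq_var
    obtain ⟨s₂, h₂⟩ := (ts 1).exists_eq_var
    show (ts 0).realize _ ≤ (ts 1).realize _ ↔ (ts 0).realize _ ≤ (ts 1).realize _
    rw [h₁, h₂]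
    exact le_iff_le_of_cmp_eq_cmp (hP _ (hmem s₁) _ (hmem s₂))
  | imp φ ψ ihφ ihψ => exact imp_congr (ihφ hfin hP hmem) (ihψ hfin hP hmem)
  | all φ ih =>
    have step : ∀ {d b : Q}, IsPartialIso (insert (d, b) P) →
        (φ.Realize v (Fin.snoc xs d) ↔ φ.Realize w (Fin.snoc ys b)) := by
      refine fun hP' => ih (hfin.insert _) hP' ?_
      rintro (s | s)
      · exact mem_insert_of_mem _ (hmem (Sum.inl s))
      · refine Fin.lastCases ?_ (fun i => ?_) s
        · simp
        · simp only [Sum.elim_inr, Fin.snoc_castSucc]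
          exact mem_insert_of_mem _ (hmem (Sum.inr i))
    refine ⟨fun H b => ?_, fun H d => ?_⟩
    · obtain ⟨d, hd⟩ := hP.exists_insert_fst hfin b
      exact (step hd).1 (H d)
    · obtain ⟨b, hb⟩ := hP.exists_insert hfin d
      exact (step hb).2 (H b)

end FirstOrder.Language

section SameOrderType

variable {Q : Type*} {m n k l : ℕ}

def pairsOver (a : Fin m → Q) (x y : Fin n → Q) : Set (Q × Q) :=
  range (fun j => (a j, a j)) ∪ range (fun i => (x i, y i))

lemma pairsOver_finite (a : Fin m → Q) (x y : Fin n → Q) : (pairsOver a x y).Finite :=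
  (finite_range _).union (finite_range _)

variable [LinearOrder Q] {a : Fin m → Q}

lemma sameOrderType_iff_isPartialIso {x y : Fin n → Q} :
    SameOrderType a x y ↔ IsPartialIso (pairsOver a x y) := by
  constructor
  · rintro ⟨hxx, hxa⟩ _ (⟨j, rfl⟩ | ⟨i, rfl⟩) _ (⟨j', rfl⟩ | ⟨i', rfl⟩)
    · rfl
    · exact cmp_eq_cmp_of_lt_iff_lt (hxa i' j).2 (hxa i' j).1
    · exact cmp_eq_cmp_of_lt_iff_lt (hxa i j').1 (hxa i j').2
    · exact cmp_eq_cmp_of_lt_iff_lt (hxx i i') (hxx i' i)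
  · intro hP
    have hx : ∀ i, (x i, y i) ∈ pairsOver a x y := fun i => Or.inr ⟨i, rfl⟩
    have ha : ∀ j, (a j, a j) ∈ pairsOver a x y := fun j => Or.inl ⟨j, rfl⟩
    exact ⟨fun i i' => lt_iff_lt_of_cmp_eq_cmp (hP _ (hx i) _ (hx i')), fun i j =>
      ⟨lt_iff_lt_of_cmp_eq_cmp (hP _ (hx i) _ (ha j)),
        lt_iff_lt_of_cmp_eq_cmp (hP _ (ha j) _ (hx i))⟩⟩

lemma SameOrderType.comp {x y : Fin n → Q} (h : SameOrderType a x y) (σ : Fin k → Fin n) :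
    SameOrderType a (x ∘ σ) (y ∘ σ) :=
  ⟨fun _ _ => h.1 _ _, fun _ _ => h.2 _ _⟩

lemma SameOrderType.of_forall_mem_pairsOver {x y : Fin n → Q} (h : SameOrderType a x y)
    {z z' : Fin k → Q} (hz : ∀ s, (z s, z' s) ∈ pairsOver a x y) : SameOrderType a z z' := by
  rw [sameOrderType_iff_isPartialIso] at h ⊢
  refine h.mono (union_subset subset_union_left ?_)
  rintro _ ⟨s, rfl⟩
  exact hz s

lemma SameOrderType.exists_extend {z : Fin k → Q} {σ : Fin l → Fin k} {w : Fin l → Q}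
    (hw : SameOrderType a (z ∘ σ) w) (hz : ∀ s, z s ∈ range (z ∘ σ) ∪ range a) :
    ∃ z', z' ∘ σ = w ∧ SameOrderType a z z' := by
  have hpair : ∀ s, ∃ q, (z s, q) ∈ pairsOver a (z ∘ σ) w := by
    intro s
    rcases hz s with ⟨t, ht⟩ | ⟨j, hj⟩
    · exact ⟨w t, Or.inr ⟨t, by rw [← ht]⟩⟩
    · exact ⟨a j, Or.inl ⟨j, by simp [hj]⟩⟩
  choose z' hz' using hpair
  refine ⟨z', funext fun t => ?_, hw.of_forall_mem_pairsOver hz'⟩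
  exact (sameOrderType_iff_isPartialIso.1 hw).snd_eq (hz' (σ t)) (Or.inr ⟨t, rfl⟩)

lemma Set.Definable.mem_iff_of_sameOrderType [DenselyOrdered Q] [NoMinOrder Q] [NoMaxOrder Q]
    {S : Set (Fin n → Q)} (hS : (range a).Definable Language.order S) {x y : Fin n → Q}
    (h : SameOrderType a x y) :
    x ∈ S ↔ y ∈ S := by
  obtain ⟨φ, rfl⟩ := definable_iff_exists_formula_sum.1 hS
  refine φ.realize_iff_of_isPartialIso (pairsOver_finite a x y)
    (sameOrderType_iff_isPartialIso.1 h) ?_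
  rintro ((⟨_, j, rfl⟩ | i) | i)
  · exact Or.inl ⟨j, rfl⟩
  · exact Or.inr ⟨i, rfl⟩
  · exact i.elim0

lemma exists_ne_forall_cmp_eq [DenselyOrdered Q] [NoMinOrder Q] [NoMaxOrder Q] {F : Set Q}
    (hF : F.Finite) {q : Q} (hq : q ∉ F) : ∃ q', q' ≠ q ∧ ∀ c ∈ F, cmp c q = cmp c q' := by
  classical
  have : Nonempty Q := ⟨q⟩
  obtain ⟨q', hlo, hhi⟩ := Order.exists_between_finsets
    (insert q (hF.toFinset.filter (· < q))) (hF.toFinset.filter (q < ·)) (by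
      simp only [Finset.mem_insert, Finset.mem_filter, Finite.mem_toFinset]
      rintro x (rfl | ⟨-, hx⟩) y ⟨-, hy⟩
      exacts [hy, hx.trans hy])
  refine ⟨q', (hlo q (Finset.mem_insert_self _ _)).ne', fun c hc => ?_⟩
  rcases lt_or_gt_of_ne (ne_of_mem_of_not_mem hc hq) with h | h
  · rw [h.cmp_eq_lt, (hlo c (by simp [hc, h])).cmp_eq_lt]
  · rw [h.cmp_eq_gt, (hhi c (by simp [hc, h])).cmp_eq_gt]

lemma exists_ne_sameOrderType_replace [DenselyOrdered Q] [NoMinOrder Q] [NoMaxOrder Q]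
    (z : Fin k → Q) {q : Q} (hq : q ∉ range a) :
    ∃ q', q' ≠ q ∧ SameOrderType a z (fun s => if z s = q then q' else z s) := by
  set F := (range z ∪ range a) \ {q}
  obtain ⟨q', hne, hq'⟩ := exists_ne_forall_cmp_eq (((finite_range z).union (finite_range a)).sdiff)
    (fun h : q ∈ F => h.2 rfl)
  have hP : IsPartialIso (insert (q, q') ((fun c => (c, c)) '' F)) := by
    refine IsPartialIso.insert_of_forall_cmp_eq ?_ ?_
    · rintro _ ⟨c, -, rfl⟩ _ ⟨c', -, rfl⟩
      rfl
    · rintro _ ⟨c, hc, rfl⟩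
      exact hq' c hc
  refine ⟨q', hne, sameOrderType_iff_isPartialIso.2 (hP.mono ?_)⟩
  rintro _ (⟨j, rfl⟩ | ⟨s, rfl⟩)
  · exact Or.inr ⟨a j, ⟨Or.inr ⟨j, rfl⟩, fun h => hq ⟨j, h⟩⟩, rfl⟩
  · by_cases hs : z s = q
    · simp [hs]
    · simp only [hs, if_false]
      exact Or.inr ⟨z s, ⟨Or.inl ⟨s, rfl⟩, hs⟩, rfl⟩

/-- Definable closure in a dense order is trivial: a coordinate that is neither a parameter nor
among those picked by `σ` could be moved without leaving `S` or changing `z ∘ σ`. -/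
lemma Set.Definable.apply_mem_range_union [DenselyOrdered Q] [NoMinOrder Q] [NoMaxOrder Q]
    {S : Set (Fin k → Q)} (hS : (range a).Definable Language.order S) {z : Fin k → Q}
    (hz : z ∈ S) (σ : Fin l → Fin k) (huniq : ∀ z' ∈ S, z' ∘ σ = z ∘ σ → z' = z) (s : Fin k) :
    z s ∈ range (z ∘ σ) ∪ range a := by
  by_contra hs
  rw [mem_union, not_or] at hs
  obtain ⟨q', hne, htype⟩ := exists_ne_sameOrderType_replace z hs.2
  have hfix := huniq _ ((hS.mem_iff_of_sameOrderType htype).1 hz)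
    (funext fun t => if_neg fun h => hs.1 ⟨t, h⟩)
  exact hne (by simpa using congrFun hfix s)

lemma notMem_range_of_inGap {a : Fin m → Q} (ha : StrictAnti a) {g : Fin (m + 1)} {q : Q}
    (hg : InGap a g q) : q ∉ range a := by
  rintro ⟨j, rfl⟩
  rcases le_or_gt (g : ℕ) j with h | h
  · have hgm : (g : ℕ) < m := lt_of_le_of_lt h j.isLt
    exact (hg.1 hgm).not_ge (ha.antitone (Fin.le_def.2 h))
  · have hg₁ : (g : ℕ) - 1 < m := by omega
    exact (hg.2 ⟨_, hg₁⟩ (by simp; omega)).not_ge (ha.antitone (Fin.le_def.2 (by simp; omega)))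

lemma gapCount_eq_of_forall_notMem (ha : StrictAnti a) {x : Fin n → Q} {y : Fin k → Q}
    (h : ∀ q ∉ range a, q ∈ range x ↔ q ∈ range y) : gapCount a x = gapCount a y := by
  funext g
  unfold gapCount
  congr 1
  ext q
  exact and_congr_left fun hq => h q (notMem_range_of_inGap ha hq)

end SameOrderType

lemma Fin.append_comp_castAdd {α : Type*} {n k : ℕ} (x : Fin n → α) (y : Fin k → α) :
    Fin.append x y ∘ Fin.castAdd k = x :=
  funext (Fin.append_left x y)

lemma Fin.append_comp_natAdd {α : Type*} {n k : ℕ} (x : Fin n → α) (y : Fin k → α) :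
    Fin.append x y ∘ Fin.natAdd n = y :=
  funext (Fin.append_right x y)

section GraphOn

variable {Q : Type*} {n k : ℕ} {D : Set (Fin n → Q)} {f : (Fin n → Q) → (Fin k → Q)}
  {z z' : Fin (n + k) → Q}

lemma append_mem_graphOn {x : Fin n → Q} (hx : x ∈ D) : Fin.append x (f x) ∈ graphOn D f :=
  ⟨x, hx, rfl⟩

lemma mem_graphOn_iff :
    z ∈ graphOn D f ↔ z ∘ Fin.castAdd k ∈ D ∧ f (z ∘ Fin.castAdd k) = z ∘ Fin.natAdd n := by
  constructor
  · rintro ⟨x, hx, rfl⟩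
    rw [Fin.append_comp_castAdd, Fin.append_comp_natAdd]
    exact ⟨hx, rfl⟩
  · rintro ⟨hx, hf⟩
    exact ⟨_, hx, by rw [hf]; exact Fin.append_castAdd_natAdd.symm⟩

lemma eq_of_comp_castAdd_of_comp_natAdd (h₁ : z' ∘ Fin.castAdd k = z ∘ Fin.castAdd k)
    (h₂ : z' ∘ Fin.natAdd n = z ∘ Fin.natAdd n) : z' = z :=
  funext fun s => Fin.addCases (congrFun h₁) (congrFun h₂) s

end GraphOn

section Graph

variable {Q : Type*} [LinearOrder Q] [DenselyOrdered Q] [NoMinOrder Q] [NoMaxOrder Q]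
  {m n k : ℕ} {a : Fin m → Q} {D : Set (Fin n → Q)} {f : (Fin n → Q) → (Fin k → Q)}

lemma apply_mem_range_comp_castAdd_union (hG : (range a).Definable Language.order (graphOn D f))
    {z : Fin (n + k) → Q} (hz : z ∈ graphOn D f) (s : Fin (n + k)) :
    z s ∈ range (z ∘ Fin.castAdd k) ∪ range a := by
  refine hG.apply_mem_range_union hz _ (fun z' hz' h => ?_) s
  refine eq_of_comp_castAdd_of_comp_natAdd h ?_
  rw [← (mem_graphOn_iff.1 hz).2, ← (mem_graphOn_iff.1 hz').2, h]

lemma apply_mem_range_comp_natAdd_union (hG : (range a).Definable Language.order (graphOn D f))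
    (hf : InjOn f D) {z : Fin (n + k) → Q} (hz : z ∈ graphOn D f) (s : Fin (n + k)) :
    z s ∈ range (z ∘ Fin.natAdd n) ∪ range a := by
  refine hG.apply_mem_range_union hz _ (fun z' hz' h => ?_) s
  obtain ⟨hx, hfx⟩ := mem_graphOn_iff.1 hz
  obtain ⟨hx', hfx'⟩ := mem_graphOn_iff.1 hz'
  exact eq_of_comp_castAdd_of_comp_natAdd (hf hx' hx (by rw [hfx, hfx', h])) h

variable {x x' : Fin n → Q}

lemma SameOrderType.apply_of_definable_graphOn
    (hG : (range a).Definable Language.order (graphOn D f)) (hx : x ∈ D)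
    (h : SameOrderType a x x') : SameOrderType a (f x) (f x') := by
  have hz := append_mem_graphOn (f := f) hx
  obtain ⟨z', hz'x', hzz'⟩ := SameOrderType.exists_extend (σ := Fin.castAdd k)
    ((Fin.append_comp_castAdd x (f x)).symm ▸ h) (apply_mem_range_comp_castAdd_union hG hz)
  have hfz' := (mem_graphOn_iff.1 ((hG.mem_iff_of_sameOrderType hzz').1 hz)).2
  rw [hz'x'] at hfz'
  simpa only [Fin.append_comp_natAdd, ← hfz'] using hzz'.comp (Fin.natAdd n)

lemma SameOrderType.of_apply_of_definable_graphOn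
    (hG : (range a).Definable Language.order (graphOn D f)) (hf : InjOn f D) (hx : x ∈ D)
    (hx' : x' ∈ D) (h : SameOrderType a (f x) (f x')) : SameOrderType a x x' := by
  have hz := append_mem_graphOn (f := f) hx
  obtain ⟨z', hz'fx', hzz'⟩ := SameOrderType.exists_extend (σ := Fin.natAdd n)
    ((Fin.append_comp_natAdd x (f x)).symm ▸ h) (apply_mem_range_comp_natAdd_union hG hf hz)
  obtain ⟨hz'D, hfz'⟩ := mem_graphOn_iff.1 ((hG.mem_iff_of_sameOrderType hzz').1 hz)
  have hz'x' : z' ∘ Fin.castAdd k = x' := hf hz'D hx' (hfz'.trans hz'fx')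
  simpa only [Fin.append_comp_castAdd, ← hz'x'] using hzz'.comp (Fin.castAdd k)

lemma gapCount_apply_of_definable_graphOn (ha : StrictAnti a)
    (hG : (range a).Definable Language.order (graphOn D f)) (hf : InjOn f D) (hx : x ∈ D) :
    gapCount a (f x) = gapCount a x := by
  have hz := append_mem_graphOn (f := f) hx
  refine gapCount_eq_of_forall_notMem ha fun q hq => ⟨?_, ?_⟩
  · rintro ⟨j, rfl⟩
    have := apply_mem_range_comp_castAdd_union hG hz (Fin.natAdd n j)
    simpa [Fin.append_comp_castAdd, hq] using this
  · rintro ⟨i, rfl⟩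
    have := apply_mem_range_comp_natAdd_union hG hf hz (Fin.castAdd k i)
    simpa [Fin.append_comp_natAdd, hq] using this

end Graph

lemma chi_eq_of_bijOn {Q : Type*} [LinearOrder Q] {m n k : ℕ} {a : Fin m → Q}
    {D₁ : Set (Fin n → Q)} {D₂ : Set (Fin k → Q)} {f : (Fin n → Q) → (Fin k → Q)}
    (hf : BijOn f D₁ D₂)
    (htype : ∀ x ∈ D₁, ∀ y ∈ D₁, SameOrderType a x y ↔ SameOrderType a (f x) (f y))
    (hgap : ∀ x ∈ D₁, gapCount a (f x) = gapCount a x) (v : Fin (m + 1) → ℕ) :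
    chi a v D₁ = chi a v D₂ := by
  have hclass : ∀ x ∈ D₁,
      f '' {y ∈ D₁ | SameOrderType a x y} = {z ∈ D₂ | SameOrderType a (f x) z} := by
    intro x hx
    ext z
    constructor
    · rintro ⟨y, ⟨hy, hxy⟩, rfl⟩
      exact ⟨hf.mapsTo hy, (htype x hx y hy).1 hxy⟩
    · rintro ⟨hz, hxz⟩
      obtain ⟨y, hy, rfl⟩ := hf.surjOn hz
      exact ⟨y, ⟨hy, (htype x hx y hy).2 hxz⟩, rfl⟩
  have hinj : InjOn (image f) {C | ∃ x ∈ D₁,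
      C = {y ∈ D₁ | SameOrderType a x y} ∧ ∀ g, gapCount a x g = v g} := by
    rintro _ ⟨x, -, rfl, -⟩ _ ⟨x', -, rfl, -⟩ h
    exact (hf.injOn.image_eq_image_iff (sep_subset _ _) (sep_subset _ _)).1 h
  unfold chi
  rw [← hinj.ncard_image]
  congr 1
  ext C
  constructor
  · rintro ⟨_, ⟨x, hx, rfl, hv⟩, rfl⟩
    exact ⟨f x, hf.mapsTo hx, hclass x hx, by rwa [hgap x hx]⟩
  · rintro ⟨z, hz, rfl, hv⟩
    obtain ⟨x, hx, rfl⟩ := hf.surjOn hz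
    exact ⟨_, ⟨x, hx, rfl, by rwa [← hgap x hx]⟩, hclass x hx⟩

lemma Set.Finite.exists_strictAnti_range_eq {Q : Type*} [LinearOrder Q] {A : Set Q}
    (hA : A.Finite) : ∃ (m : ℕ) (a : Fin m → Q), StrictAnti a ∧ range a = A :=
  ⟨_, hA.toFinset.orderEmbOfFin rfl ∘ Fin.rev,
    (OrderEmbedding.strictMono _).comp_strictAnti Fin.rev_strictAnti, by
      rw [Fin.rev_surjective.range_comp, Finset.range_orderEmbOfFin, hA.coe_toFinset]⟩

theorem dlo_defBij_chi_eq_general {Q : Type*} [LinearOrder Q] [DenselyOrdered Q] [NoMinOrder Q]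
    [NoMaxOrder Q] {n : ℕ} (D₁ D₂ : Set (Fin n → Q))
    (h₁ : DLODefinable D₁) (h₂ : DLODefinable D₂) (h : DefBij D₁ D₂) :
    ∃ (m : ℕ) (a : Fin m → Q), StrictAnti a ∧
      (Set.range a).Definable Language.order D₁ ∧
      (Set.range a).Definable Language.order D₂ ∧
      ∀ v : Fin (m + 1) → ℕ, chi a v D₁ = chi a v D₂ := by
  obtain ⟨A₁, hA₁, hD₁⟩ := h₁
  obtain ⟨A₂, hA₂, hD₂⟩ := h₂
  obtain ⟨f, hf, A₃, hA₃, hG⟩ := h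
  obtain ⟨m, a, ha, hrange⟩ := ((hA₁.union hA₂).union hA₃).exists_strictAnti_range_eq
  have hG' : (range a).Definable Language.order (graphOn D₁ f) :=
    hG.mono (hrange ▸ subset_union_right)
  refine ⟨m, a, ha, hD₁.mono (hrange ▸ subset_union_left.trans subset_union_left),
    hD₂.mono (hrange ▸ subset_union_right.trans subset_union_left),
    chi_eq_of_bijOn hf (fun x hx y hy => ?_)
      (fun x hx => gapCount_apply_of_definable_graphOn ha hG' hf.injOn hx)⟩
  exact ⟨fun hxy => hxy.apply_of_definable_graphOn hG' hx,
    SameOrderType.of_apply_of_definable_graphOn hG' hf.injOn hx hy⟩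

/-- If two definable subsets of `Q^n` are in definable bijection, then there is a strictly
decreasing parameter tuple over which both are definable and all their characteristics agree. -/
theorem dlo_defBij_chi_eq {Q : Type*} [LinearOrder Q] [DenselyOrdered Q] [NoMinOrder Q]
    [NoMaxOrder Q] [Nonempty Q] {n : ℕ} (D₁ D₂ : Set (Fin n → Q))
    (h₁ : DLODefinable D₁) (h₂ : DLODefinable D₂) (h : DefBij D₁ D₂) :
    ∃ (m : ℕ) (a : Fin m → Q), StrictAnti a ∧
      (Set.range a).Definable Language.order D₁ ∧
      (Set.range a).Definable Language.order D₂ ∧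
      ∀ v : Fin (m + 1) → ℕ, chi a v D₁ = chi a v D₂ :=
  dlo_defBij_chi_eq_general D₁ D₂ h₁ h₂ h
end

section
/- Let Q be a nonempty dense linear order without endpoints and let a_1 > a_2 > ⋯ > a_m be a strictly decreasing tuple in Q. Let x ∈ Q^n and y ∈ Q^n, and let A₁ = {z ∈ Q^n : z has the same order type over a as x} and A₂ = {z ∈ Q^n : z has the same order type over a as y}. If for each of the m+1 gaps determined by a the number of distinct coordinate values of x lying in that gap equals the number of distinct coordinate values of y lying in that gap, then there is a definable bijection from A₁ onto A₂. -/
/-!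
Put `X = {a k} ∪ {x i}` and `Y = {a k} ∪ {y j}`. Outside the `a k`, the points of `X` are
distributed over the gaps, so the gap counts of `x` determine how many points of `X` lie below
each `a k`, and the size of `X`. As they agree with those of `y`, every `a k` has the same rank in
`X` as in `Y`, and `|X| = |Y|`: matching points of equal rank is an order isomorphism `X ≃ Y`
fixing the `a k`. Choosing for each `y j` an entry `c j` of `(a, x)` of the same rank gives the map
`z ↦ (a, z) ∘ c`, which copies coordinates of `z` and constants `a k`. It carries the class of `x`
into that of `y`, the map built in the same way from `y` inverts it, and its graph is cut out by
the order type of `x` over `a` together with equalities.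
-/

open FirstOrder FirstOrder.Language

attribute [local instance] FirstOrder.Language.orderStructure

open Set
open scoped Function

section Similarity

variable {ι κ α β γ : Type*}

def OrderSimilar [LT α] [LT β] (f : ι → α) (g : ι → β) : Prop :=
  ∀ u v, f u < f v ↔ g u < g v

namespace OrderSimilar

section LT

variable [LT α] [LT β] [LT γ] {f : ι → α} {g : ι → β} {h : ι → γ}

theorem symm (hfg : OrderSimilar f g) : OrderSimilar g f :=
  fun u v => (hfg u v).symm

theorem trans (hfg : OrderSimilar f g) (hgh : OrderSimilar g h) : OrderSimilar f h :=
  fun u v => (hfg u v).trans (hgh u v)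

theorem comp (hfg : OrderSimilar f g) (σ : κ → ι) : OrderSimilar (f ∘ σ) (g ∘ σ) :=
  fun u v => hfg (σ u) (σ v)

end LT

variable [LinearOrder α] [LinearOrder β] {f : ι → α} {g : ι → β}

theorem apply_eq_apply_iff (hfg : OrderSimilar f g) {u v : ι} : f u = f v ↔ g u = g v := by
  rw [← not_iff_not, ← Ne, ← Ne, ne_iff_lt_or_gt, ne_iff_lt_or_gt, hfg u v, hfg v u]

theorem comp_eq_of_comp_eq (hfg : OrderSimilar f g) {σ : ι → ι} (hf : f ∘ σ = f) : g ∘ σ = g :=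
  funext fun u => hfg.apply_eq_apply_iff.1 (congrFun hf u)

end OrderSimilar

theorem StrictMonoOn.orderSimilar_comp [LinearOrder α] [Preorder β] {ρ : α → β} {s : Set α}
    (hρ : StrictMonoOn ρ s) {f : ι → α} (hf : ∀ u, f u ∈ s) : OrderSimilar f (ρ ∘ f) :=
  fun u v => (hρ.lt_iff_lt (hf u) (hf v)).symm

end Similarity

section Rank

variable {α : Type*} [LinearOrder α] {s : Set α}

noncomputable def rankIn (s : Set α) (q : α) : ℕ :=
  (s ∩ Iio q).ncard

theorem strictMonoOn_rankIn (hs : s.Finite) : StrictMonoOn (rankIn s) s := fun u hu _ _ huv =>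
  ncard_lt_ncard ⟨inter_subset_inter_right _ (Iio_subset_Iio huv.le),
    fun h => lt_irrefl u (h ⟨hu, huv⟩).2⟩ (hs.inter_of_left _)

theorem rankIn_lt_ncard (hs : s.Finite) {q : α} (hq : q ∈ s) : rankIn s q < s.ncard :=
  ncard_lt_ncard ⟨inter_subset_left, fun h => lt_irrefl q (h hq).2⟩ hs

theorem rankIn_image (hs : s.Finite) : rankIn s '' s = Iio s.ncard := by
  refine eq_of_subset_of_ncard_le (image_subset_iff.2 fun q => rankIn_lt_ncard hs) ?_
  rw [(strictMonoOn_rankIn hs).injOn.ncard_image, ← Finset.coe_Iio, ncard_coe_finset,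
    Nat.card_Iio]

variable {ι κ : Type*} {f : ι → α} {g : κ → α}

theorem orderSimilar_comp_of_rankIn_comp_eq {σ : κ → ι} (hf : (range f).Finite)
    (hg : (range g).Finite) (h : rankIn (range f) ∘ f ∘ σ = rankIn (range g) ∘ g) :
    OrderSimilar g (f ∘ σ) := by
  have hg' := (strictMonoOn_rankIn hg).orderSimilar_comp (f := g) mem_range_self
  have hf' := (strictMonoOn_rankIn hf).orderSimilar_comp (f := f ∘ σ) fun u => mem_range_self _
  rw [← h] at hg'
  exact hg'.trans hf'.symm

theorem comp_comp_eq_of_rankIn_comp_eq {σ : κ → ι} {τ : ι → κ} (hf : (range f).Finite)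
    (h : rankIn (range f) ∘ f ∘ σ = rankIn (range g) ∘ g)
    (h' : rankIn (range g) ∘ g ∘ τ = rankIn (range f) ∘ f) : f ∘ σ ∘ τ = f :=
  funext fun u => (strictMonoOn_rankIn hf).injOn (mem_range_self _) (mem_range_self _)
    ((congrFun h (τ u)).trans (congrFun h' u))

end Rank

theorem ncard_eq_of_ncard_inter_eq {α ι : Type*} [Finite ι] {s : ι → Set α}
    (hs : ⋃ i, s i = univ) (hd : Pairwise (Disjoint on s)) {t t' : Set α} (ht : t.Finite)
    (ht' : t'.Finite) (h : ∀ i, (t ∩ s i).ncard = (t' ∩ s i).ncard) : t.ncard = t'.ncard := by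
  have hsum : ∀ t : Set α, t.Finite → t.ncard = ∑ᶠ i, (t ∩ s i).ncard := fun t ht => by
    rw [← ncard_iUnion_of_finite (fun i => ht.inter_of_left _)
      fun i j hij => (hd hij).mono inter_subset_right inter_subset_right, ← inter_iUnion, hs,
      inter_univ]
  rw [hsum t ht, hsum t' ht', finsum_congr h]

section Gaps

variable {Q : Type*} [LinearOrder Q] {m : ℕ} {a : Fin m → Q} {g : Fin (m + 1)} {q : Q}

theorem InGap.lt_apply (ha : StrictAnti a) (hq : InGap a g q) {k : Fin m} (hk : (k : ℕ) < g) :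
    q < a k :=
  (hq.2 ⟨g - 1, by omega⟩ (Nat.sub_add_cancel (by omega))).trans_le
    (ha.antitone (Fin.le_def.2 (Nat.le_sub_one_of_lt hk)))

theorem InGap.apply_lt (ha : StrictAnti a) (hq : InGap a g q) {k : Fin m} (hk : (g : ℕ) ≤ k) :
    a k < q :=
  (ha.antitone (Fin.le_def.2 hk)).trans_lt (hq.1 (by omega))

theorem not_inGap_apply (ha : StrictAnti a) (k : Fin m) : ¬ InGap a g (a k) := fun h =>
  (lt_or_ge (k : ℕ) g).elim (fun hk => (h.lt_apply ha hk).false) fun hk => (h.apply_lt ha hk).false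

theorem exists_inGap (hq : q ∉ range a) : ∃ g, InGap a g q := by
  classical
  have hex : ∃ g, g ≤ m ∧ ∀ k : Fin m, g ≤ k → a k < q := ⟨m, le_rfl, fun k hk => by omega⟩
  obtain ⟨hgm, hg⟩ := Nat.find_spec hex
  refine ⟨⟨Nat.find hex, by omega⟩, fun h => hg _ le_rfl, fun j hj => ?_⟩
  replace hj : (j : ℕ) + 1 = Nat.find hex := hj
  obtain ⟨k, hjk, hkq⟩ : ∃ k : Fin m, (j : ℕ) ≤ k ∧ ¬ a k < q := by
    simpa using Nat.find_min hex (m := j) (by omega)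
  obtain rfl : k = j := by
    by_contra hkj
    exact hkq (hg k (by omega))
  exact (not_lt.1 hkq).lt_of_ne fun h => hq ⟨k, h.symm⟩

theorem disjoint_inGap (ha : StrictAnti a) {g g' : Fin (m + 1)} (hgg : g ≠ g') :
    Disjoint {q | InGap a g q} {q | InGap a g' q} := by
  wlog hlt : g < g' generalizing g g'
  · exact (this hgg.symm (lt_of_le_of_ne (not_lt.1 hlt) hgg.symm)).symm
  refine disjoint_left.2 fun q hq hq' => ?_
  have hk : (g : ℕ) < m := by omega
  exact lt_asymm (hq.apply_lt ha (k := ⟨g, hk⟩) le_rfl) (hq'.lt_apply ha (k := ⟨g, hk⟩) hlt)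

end Gaps

section Cells

variable {Q : Type*} [LinearOrder Q] {m : ℕ} {a : Fin m → Q}

def cell (a : Fin m → Q) : Fin m ⊕ Fin (m + 1) → Set Q :=
  Sum.elim (fun k => {a k}) fun g => {q | InGap a g q}

theorem iUnion_cell : ⋃ p, cell a p = univ := by
  refine eq_univ_of_forall fun q => ?_
  by_cases hq : q ∈ range a
  · obtain ⟨k, rfl⟩ := hq
    exact mem_iUnion.2 ⟨.inl k, rfl⟩
  · obtain ⟨g, hg⟩ := exists_inGap hq
    exact mem_iUnion.2 ⟨.inr g, hg⟩

theorem pairwise_disjoint_cell (ha : StrictAnti a) : Pairwise (Disjoint on cell a) := by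
  rintro (k | g) (k' | g') hne
  · exact disjoint_singleton.2 (ha.injective.ne fun h => hne (congrArg _ h))
  · exact disjoint_singleton_left.2 (not_inGap_apply ha k)
  · exact disjoint_singleton_right.2 (not_inGap_apply ha k')
  · exact disjoint_inGap ha fun h => hne (congrArg _ h)

variable {n n' : ℕ}

theorem range_sumElim_inter_inGap (ha : StrictAnti a) (x : Fin n → Q) (g : Fin (m + 1)) :
    range (Sum.elim a x) ∩ {q | InGap a g q} = {q | (∃ i, x i = q) ∧ InGap a g q} := by
  ext q
  rw [Sum.elim_range]
  constructor
  · rintro ⟨⟨k, rfl⟩ | hx, hg⟩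
    exacts [(not_inGap_apply ha k hg).elim, ⟨hx, hg⟩]
  · exact fun ⟨hx, hg⟩ => ⟨.inr hx, hg⟩

variable {x : Fin n → Q} {y : Fin n' → Q}

theorem ncard_range_sumElim_inter_eq (ha : StrictAnti a)
    (hxy : ∀ g, gapCount a x g = gapCount a y g) {S : Set Q}
    (hS : ∀ g, {q | InGap a g q} ⊆ S ∨ Disjoint S {q | InGap a g q}) :
    (range (Sum.elim a x) ∩ S).ncard = (range (Sum.elim a y) ∩ S).ncard := by
  refine ncard_eq_of_ncard_inter_eq iUnion_cell (pairwise_disjoint_cell ha)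
    ((finite_range _).inter_of_left _) ((finite_range _).inter_of_left _) ?_
  rintro (k | g)
  · have hk : ∀ {ν : Type} (z : ν → Q), range (Sum.elim a z) ∩ {a k} = {a k} :=
      fun z => inter_eq_right.2 (singleton_subset_iff.2 ⟨.inl k, rfl⟩)
    simp only [cell, Sum.elim_inl, inter_right_comm _ S, hk]
  · rcases hS g with hsub | hdisj
    · simp only [cell, Sum.elim_inr, inter_assoc, inter_eq_right.2 hsub,
        range_sumElim_inter_inGap ha]
      exact hxy g
    · simp only [cell, Sum.elim_inr, inter_assoc, hdisj.inter_eq, inter_empty]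

theorem rankIn_range_sumElim_apply (ha : StrictAnti a)
    (hxy : ∀ g, gapCount a x g = gapCount a y g) (k : Fin m) :
    rankIn (range (Sum.elim a x)) (a k) = rankIn (range (Sum.elim a y)) (a k) := by
  refine ncard_range_sumElim_inter_eq ha hxy fun g => ?_
  rcases lt_or_ge (k : ℕ) g with hk | hk
  · exact .inl fun q hq => hq.lt_apply ha hk
  · exact .inr (disjoint_left.2 fun q hqk hq => lt_asymm hqk (hq.apply_lt ha hk))

theorem ncard_range_sumElim_eq (ha : StrictAnti a)
    (hxy : ∀ g, gapCount a x g = gapCount a y g) :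
    (range (Sum.elim a x)).ncard = (range (Sum.elim a y)).ncard := by
  simpa using ncard_range_sumElim_inter_eq ha hxy (S := univ) fun g => .inl (subset_univ _)

theorem exists_rankIn_comp_eq (ha : StrictAnti a) (hxy : ∀ g, gapCount a x g = gapCount a y g) :
    ∃ c : Fin n' → Fin m ⊕ Fin n,
      rankIn (range (Sum.elim a x)) ∘ Sum.elim a x ∘ Sum.elim Sum.inl c =
        rankIn (range (Sum.elim a y)) ∘ Sum.elim a y := by
  have hmatch : ∀ j, ∃ u, rankIn (range (Sum.elim a x)) (Sum.elim a x u) =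
      rankIn (range (Sum.elim a y)) (y j) := by
    intro j
    have hj := rankIn_lt_ncard (finite_range _) (mem_range_self (f := Sum.elim a y) (.inr j))
    rw [← ncard_range_sumElim_eq ha hxy, ← mem_Iio, ← rankIn_image (finite_range _)] at hj
    obtain ⟨_, ⟨u, rfl⟩, hu⟩ := hj
    exact ⟨u, hu⟩
  choose c hc using hmatch
  exact ⟨c, funext fun | .inl k => rankIn_range_sumElim_apply ha hxy k | .inr j => hc j⟩

end Cells

theorem sumElim_sumElim_comp {μ ν ν' Q : Type*} (a : μ → Q) (z : ν → Q) (c : ν' → μ ⊕ ν) :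
    Sum.elim a (Sum.elim a z ∘ c) = Sum.elim a z ∘ Sum.elim Sum.inl c := by
  rw [Sum.comp_elim, Sum.elim_comp_inl]

section Substitution

variable {Q : Type*} [LinearOrder Q] {m n n' : ℕ} {a : Fin m → Q}

theorem sameOrderType_iff_orderSimilar {x z : Fin n → Q} :
    SameOrderType a x z ↔ OrderSimilar (Sum.elim a x) (Sum.elim a z) := by
  refine ⟨fun h => ?_, fun h => ⟨fun i j => h (.inr i) (.inr j),
    fun i k => ⟨h (.inr i) (.inl k), h (.inl k) (.inr i)⟩⟩⟩
  rintro (k | i) (k' | i')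
  exacts [Iff.rfl, (h.2 i' k).2, (h.2 i k').1, h.1 i i']

variable {x : Fin n → Q} {y : Fin n' → Q}

theorem mapsTo_sumElim_comp {c : Fin n' → Fin m ⊕ Fin n}
    (hc : OrderSimilar (Sum.elim a y) (Sum.elim a x ∘ Sum.elim Sum.inl c)) :
    MapsTo (fun z => Sum.elim a z ∘ c) {z | SameOrderType a x z} {w | SameOrderType a y w} := by
  intro z hz
  rw [mem_ofPred_eq, sameOrderType_iff_orderSimilar, sumElim_sumElim_comp]
  exact hc.trans ((sameOrderType_iff_orderSimilar.1 hz).comp _)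

theorem leftInvOn_sumElim_comp {c : Fin n' → Fin m ⊕ Fin n} {c' : Fin n → Fin m ⊕ Fin n'}
    (hcc' : Sum.elim a x ∘ Sum.elim Sum.inl c ∘ Sum.elim Sum.inl c' = Sum.elim a x) :
    LeftInvOn (fun w => Sum.elim a w ∘ c') (fun z => Sum.elim a z ∘ c)
      {z | SameOrderType a x z} := by
  intro z hz
  have hz' := (sameOrderType_iff_orderSimilar.1 hz).comp_eq_of_comp_eq hcc'
  calc Sum.elim a (Sum.elim a z ∘ c) ∘ c'
      = (Sum.elim a z ∘ Sum.elim Sum.inl c ∘ Sum.elim Sum.inl c') ∘ Sum.inr := by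
        rw [sumElim_sumElim_comp]; rfl
    _ = z := by rw [hz', Sum.elim_comp_inr]

theorem bijOn_sumElim_comp {c : Fin n' → Fin m ⊕ Fin n} {c' : Fin n → Fin m ⊕ Fin n'}
    (hc : OrderSimilar (Sum.elim a y) (Sum.elim a x ∘ Sum.elim Sum.inl c))
    (hc' : OrderSimilar (Sum.elim a x) (Sum.elim a y ∘ Sum.elim Sum.inl c'))
    (hcc' : Sum.elim a x ∘ Sum.elim Sum.inl c ∘ Sum.elim Sum.inl c' = Sum.elim a x)
    (hc'c : Sum.elim a y ∘ Sum.elim Sum.inl c' ∘ Sum.elim Sum.inl c = Sum.elim a y) :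
    BijOn (fun z => Sum.elim a z ∘ c) {z | SameOrderType a x z} {w | SameOrderType a y w} :=
  InvOn.bijOn ⟨leftInvOn_sumElim_comp hcc', leftInvOn_sumElim_comp hc'c⟩
    (mapsTo_sumElim_comp hc) (mapsTo_sumElim_comp hc')

end Substitution

theorem graphOn_eq {Q : Type*} {n n' : ℕ} (D : Set (Fin n → Q)) (f : (Fin n → Q) → Fin n' → Q) :
    graphOn D f =
      (· ∘ Fin.castAdd n') ⁻¹' D ∩ {v | v ∘ Fin.natAdd n = f (v ∘ Fin.castAdd n')} := by
  ext v
  constructor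
  · rintro ⟨z, hz, rfl⟩
    have hz' : Fin.append z (f z) ∘ Fin.castAdd n' = z := funext (Fin.append_left z (f z))
    rw [mem_inter_iff, mem_preimage, mem_ofPred_eq, hz']
    exact ⟨hz, funext (Fin.append_right z (f z))⟩
  · rintro ⟨hD, hf⟩
    exact ⟨_, hD, by rw [← hf]; exact Fin.append_castAdd_natAdd.symm⟩

section Definability

variable {Q : Type*} [LinearOrder Q] {ι : Type*}

instance : Language.order.OrderedStructure Q :=
  ⟨fun _ => Iff.rfl⟩

theorem definable_setOf_lt (A : Set Q) (u v : ι) :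
    A.Definable Language.order {w : ι → Q | w u < w v} := by
  refine (empty_definable_iff.2 ⟨(Term.var (Sum.inl u)).lt (Term.var (Sum.inl v)), ?_⟩).mono
    (empty_subset A)
  ext w
  simp [Formula.Realize]

theorem definable_setOf_orderSimilar [Finite ι] (A : Set Q) (f : ι → Q) :
    A.Definable Language.order {w : ι → Q | OrderSimilar f w} := by
  have : {w : ι → Q | OrderSimilar f w} = ⋂ u, ⋂ v, {w | f u < f v ↔ w u < w v} := by
    ext w; simp [OrderSimilar]
  rw [this]
  refine definable_iInter_of_finite fun u => definable_iInter_of_finite fun v => ?_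
  by_cases huv : f u < f v
  · simpa [huv] using definable_setOf_lt A u v
  · simpa [huv, compl_ofPred] using (definable_setOf_lt A u v).compl

theorem definableMap_sumElim {μ : Type*} (a : μ → Q) :
    (range a).DefinableMap Language.order fun z : ι → Q => Sum.elim a z := by
  rintro (k | i)
  · exact definableFun_const _ _ (mem_range_self k)
  · exact DefinableFun.proj _

theorem definable_setOf_sameOrderType {m n : ℕ} (a : Fin m → Q) (x : Fin n → Q) :
    (range a).Definable Language.order {z | SameOrderType a x z} := by
  simp_rw [sameOrderType_iff_orderSimilar]
  exact (definable_setOf_orderSimilar _ _).preimage_map (definableMap_sumElim a)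

theorem dloDefinable_graphOn_sumElim_comp {m n n' : ℕ} (a : Fin m → Q) (x : Fin n → Q)
    (c : Fin n' → Fin m ⊕ Fin n) :
    DLODefinable (graphOn {z | SameOrderType a x z} fun z => Sum.elim a z ∘ c) := by
  refine ⟨range a, finite_range a, ?_⟩
  rw [graphOn_eq]
  refine ((definable_setOf_sameOrderType a x).preimage_comp _).inter ?_
  simp only [funext_iff, Function.comp_apply, ofPred_forall]
  exact definable_iInter_of_finite fun j => DefinableFun.ofPred_eq (DefinableFun.proj _)
    (DefinableFun.comp (fun i => DefinableFun.proj _) (definableMap_sumElim a (c j)))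

end Definability

theorem dlo_gapCount_eq_defBij_classes_general {Q : Type*} [LinearOrder Q] {n m : ℕ} (a : Fin m → Q)
    (ha : StrictAnti a) (x y : Fin n → Q)
    (hxy : ∀ g : Fin (m + 1), gapCount a x g = gapCount a y g) :
    DefBij {z : Fin n → Q | SameOrderType a x z} {z : Fin n → Q | SameOrderType a y z} := by
  obtain ⟨c, hc⟩ := exists_rankIn_comp_eq ha hxy
  obtain ⟨c', hc'⟩ := exists_rankIn_comp_eq ha fun g => (hxy g).symm
  have hx := finite_range (Sum.elim a x)
  have hy := finite_range (Sum.elim a y)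
  refine ⟨fun z => Sum.elim a z ∘ c, ?_, dloDefinable_graphOn_sumElim_comp a x c⟩
  exact bijOn_sumElim_comp (orderSimilar_comp_of_rankIn_comp_eq hx hy hc)
    (orderSimilar_comp_of_rankIn_comp_eq hy hx hc') (comp_comp_eq_of_rankIn_comp_eq hx hc hc')
    (comp_comp_eq_of_rankIn_comp_eq hy hc' hc)

/-- If `x` and `y` have the same number of distinct coordinate values in each gap determined
by the strictly decreasing tuple `a`, then their order-type classes over `a` are in definable
bijection. -/
theorem dlo_gapCount_eq_defBij_classes {Q : Type*} [LinearOrder Q] [DenselyOrdered Q]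
    [NoMinOrder Q] [NoMaxOrder Q] [Nonempty Q] {n m : ℕ} (a : Fin m → Q)
    (ha : StrictAnti a) (x y : Fin n → Q)
    (hxy : ∀ g : Fin (m + 1), gapCount a x g = gapCount a y g) :
    DefBij {z : Fin n → Q | SameOrderType a x z} {z : Fin n → Q | SameOrderType a y z} :=
  dlo_gapCount_eq_defBij_classes_general a ha x y hxy
end

section
/- Let Q be a nonempty dense linear order without endpoints, let a ∈ Q, and for j ≥ 1 let ᵃR_j = {x ∈ Q^j : x_1 > x_2 > ⋯ > x_j > a}. For all 1 ≤ m ≤ n there is a finite partition of ᵃR_m × ᵃR_n ⊆ Q^{m+n} into pairwise disjoint definable sets such that, for each 0 ≤ i ≤ m, exactly binom(n+i, i)·binom(n, m−i) of the parts are in definable bijection with ᵃR_{n+i}, and these account for all the parts. The same statement holds with ᵃR_j replaced throughout by the unbounded set R_j = {x ∈ Q^j : x_1 > x_2 > ⋯ > x_j}. -/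
open FirstOrder FirstOrder.Language

attribute [local instance] FirstOrder.Language.orderStructure

/-- The cartesian product of `D₁ ⊆ Q^n` and `D₂ ⊆ Q^m`, viewed inside `Q^(n+m)`. -/
def pairSet {Q : Type*} {n m : ℕ} (D₁ : Set (Fin n → Q)) (D₂ : Set (Fin m → Q)) :
    Set (Fin (n + m) → Q) :=
  {z | ∃ x ∈ D₁, ∃ y ∈ D₂, z = Fin.append x y}

/-- `ᵃR_j`: strictly decreasing `j`-tuples all of whose entries exceed `a`. -/
def Rset {Q : Type*} [LinearOrder Q] (a : Q) (j : ℕ) : Set (Fin j → Q) :=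
  {x | StrictAnti x ∧ ∀ i, a < x i}

/-- `R_j`: strictly decreasing `j`-tuples. -/
def RsetUnb (Q : Type*) [LinearOrder Q] (j : ℕ) : Set (Fin j → Q) :=
  {x | StrictAnti x}

/-!
Write a pair `(x, y)` of strictly decreasing tuples as `w ∘ τ`, where `w` lists the `K` distinct
entries of `x` and `y` in decreasing order and `τ : Fin (m + n) → Fin K` is a surjection that is
increasing on each block (a quasi-shuffle). The pair `(w, τ)` is unique, so the product is the
disjoint union, over all quasi-shuffles `τ`, of the images of `R_K` under `w ↦ w ∘ τ`; composing
with a section of `τ` inverts this definably. For `K = n + i` a quasi-shuffle is determined by the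
`i` values missed by the second block and the `m - i` entries of the second block that also occur
in the first, whence `binom (n + i) i * binom n (m - i)` of them.
-/

section Definability

variable {Q : Type*} [LinearOrder Q] {A : Set Q} {α : Type*}

instance inst_s9 : Language.order.OrderedStructure Q := ⟨fun _ => Iff.rfl⟩

theorem definable_setOf_le (s t : A ⊕ α) :
    A.Definable Language.order
      {v : α → Q | Sum.elim Subtype.val v s ≤ Sum.elim Subtype.val v t} := by
  rw [Set.definable_iff_exists_formula_sum]
  exact ⟨(Term.var (Sum.inl s)).le (Term.var (Sum.inl t)), by ext; simp [Formula.Realize]⟩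

theorem definable_setOf_lt_s9 (i j : α) : A.Definable Language.order {v : α → Q | v i < v j} := by
  simpa only [Set.compl_ofPred, not_le, Sum.elim_inr] using
    (definable_setOf_le (A := A) (.inr j) (.inr i)).compl

theorem definable₁_Ioi (a : Q) : ({a} : Set Q).Definable₁ Language.order (Set.Ioi a) := by
  simpa only [Set.Definable₁, Set.mem_Ioi, Set.compl_ofPred, not_le, Sum.elim_inr,
    Sum.elim_inl] using (definable_setOf_le (A := {a}) (.inr (0 : Fin 1)) (.inl ⟨a, rfl⟩)).compl

theorem definable_setOf_strictAnti (K : ℕ) :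
    A.Definable Language.order {w : Fin K → Q | StrictAnti w} := by
  have : {w : Fin K → Q | StrictAnti w} =
      ⋂ p : {p : Fin K × Fin K // p.1 < p.2}, {w | w p.1.2 < w p.1.1} := by
    ext w
    simp [StrictAnti]
  rw [this]
  exact Set.definable_iInter_of_finite fun _ => definable_setOf_lt_s9 _ _

theorem definable_setOf_forall_mem [Finite α] {U : Set Q} (hU : A.Definable₁ Language.order U) :
    A.Definable Language.order {w : α → Q | ∀ k, w k ∈ U} := by
  have : {w : α → Q | ∀ k, w k ∈ U} =
      ⋂ k, (fun w => w ∘ fun _ : Fin 1 => k) ⁻¹' {x : Fin 1 → Q | x 0 ∈ U} := by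
    ext w
    simp
  rw [this]
  exact Set.definable_iInter_of_finite fun _ => hU.preimage_comp _

end Definability

@[simp]
theorem Fin.append_comp_castAdd_s9 {α : Sort*} {m n : ℕ} (u : Fin m → α) (v : Fin n → α) :
    Fin.append u v ∘ Fin.castAdd n = u :=
  funext (Fin.append_left u v)

@[simp]
theorem Fin.append_comp_natAdd_s9 {α : Sort*} {m n : ℕ} (u : Fin m → α) (v : Fin n → α) :
    Fin.append u v ∘ Fin.natAdd m = v :=
  funext (Fin.append_right u v)

theorem Fin.comp_append {α β : Type*} {m n : ℕ} (x : α → β) (u : Fin m → α) (v : Fin n → α) :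
    x ∘ Fin.append u v = Fin.append (x ∘ u) (x ∘ v) := by
  funext j
  induction j using Fin.addCases <;> simp

/-- Surjections `Fin (m + n) → Fin K` increasing on each of the two blocks: how an `m`-tuple and
an `n`-tuple sit inside the increasing list of their `K` distinct entries. -/
def QuasiShuffle (m n K : ℕ) : Type :=
  {τ : Fin (m + n) → Fin K // Function.Surjective τ ∧
    StrictMono (τ ∘ Fin.castAdd n) ∧ StrictMono (τ ∘ Fin.natAdd m)}

instance {m n K : ℕ} : Finite (QuasiShuffle m n K) := Subtype.finite

namespace QuasiShuffle

open Finset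

variable {m n i : ℕ}

theorem card_compl_eq {C : Finset (Fin (n + i))} (hC : C.card = i) : Cᶜ.card = n := by
  rw [card_compl, Fintype.card_fin, hC, Nat.add_sub_cancel]

noncomputable def enumCompl (C : Finset (Fin (n + i))) (hC : C.card = i) :
    Fin n ↪o Fin (n + i) :=
  Cᶜ.orderEmbOfFin (card_compl_eq hC)

theorem enumCompl_notMem {C : Finset (Fin (n + i))} (hC : C.card = i) (j : Fin n) :
    enumCompl C hC j ∉ C :=
  mem_compl.1 (orderEmbOfFin_mem _ _ j)

theorem range_enumCompl {C : Finset (Fin (n + i))} (hC : C.card = i) :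
    Set.range (enumCompl C hC) = ↑Cᶜ :=
  range_orderEmbOfFin _ _

noncomputable def coverSet (C : Finset (Fin (n + i))) (hC : C.card = i) (T : Finset (Fin n)) :
    Finset (Fin (n + i)) :=
  C ∪ T.map (enumCompl C hC).toEmbedding

theorem disjoint_map_enumCompl {C : Finset (Fin (n + i))} (hC : C.card = i)
    (T : Finset (Fin n)) : Disjoint C (T.map (enumCompl C hC).toEmbedding) := by
  simp only [disjoint_right, mem_map]
  rintro _ ⟨j, -, rfl⟩
  exact enumCompl_notMem hC j

theorem card_coverSet {C : Finset (Fin (n + i))} (hC : C.card = i) (hi : i ≤ m)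
    {T : Finset (Fin n)} (hT : T.card = m - i) : (coverSet C hC T).card = m := by
  rw [coverSet, card_union_of_disjoint (disjoint_map_enumCompl hC T), card_map, hC, hT]
  omega

theorem enumCompl_mem_coverSet {C : Finset (Fin (n + i))} (hC : C.card = i)
    {T : Finset (Fin n)} (j : Fin n) : enumCompl C hC j ∈ coverSet C hC T ↔ j ∈ T := by
  simp [coverSet, enumCompl_notMem]

/-- `C` is the set of values missed by the second block, `T` the set of positions of the second
block whose values the first block also takes. -/
noncomputable def ofFinsets (hi : i ≤ m) (CT : {C : Finset (Fin (n + i)) // C.card = i} ×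
    {T : Finset (Fin n) // T.card = m - i}) : QuasiShuffle m n (n + i) :=
  let f := (coverSet CT.1.1 CT.1.2 CT.2.1).orderEmbOfFin (card_coverSet CT.1.2 hi CT.2.2)
  let g := enumCompl CT.1.1 CT.1.2
  ⟨Fin.append f g, by
    refine ⟨fun u => ?_, by simpa using f.strictMono, by simpa using g.strictMono⟩
    by_cases hu : u ∈ CT.1.1
    · obtain ⟨k, hk⟩ : u ∈ Set.range f := by
        rw [Finset.range_orderEmbOfFin]; exact mem_union_left _ hu
      exact ⟨Fin.castAdd n k, by simpa using hk⟩
    · obtain ⟨k, hk⟩ : u ∈ Set.range g := by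
        rw [range_enumCompl]; simpa using hu
      exact ⟨Fin.natAdd m k, by simpa using hk⟩⟩

theorem ofFinsets_injective (hi : i ≤ m) : Function.Injective (ofFinsets (n := n) hi) := by
  rintro ⟨⟨C, hC⟩, ⟨T, hT⟩⟩ ⟨⟨C', hC'⟩, ⟨T', hT'⟩⟩ h
  have hval := congrArg Subtype.val h
  have hg := congrArg (Set.range <| · ∘ Fin.natAdd m) hval
  have hf := congrArg (Set.range <| · ∘ Fin.castAdd n) hval
  simp only [ofFinsets, Fin.append_comp_natAdd_s9, Fin.append_comp_castAdd_s9, range_enumCompl,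
    range_orderEmbOfFin, coe_inj, compl_inj_iff] at hg hf
  subst hg
  obtain rfl : T = T' := by
    ext j
    rw [← enumCompl_mem_coverSet hC, hf, enumCompl_mem_coverSet]
  rfl

theorem ofFinsets_surjective (hi : i ≤ m) : Function.Surjective (ofFinsets (n := n) hi) := by
  classical
  rintro ⟨τ, hτ, hf, hg⟩
  set f := τ ∘ Fin.castAdd n
  set g := τ ∘ Fin.natAdd m
  set C := (univ.image g)ᶜ
  have hC : C.card = i := by
    rw [card_compl, card_image_of_injective _ hg.injective]; simp
  have hgC : ⇑(enumCompl C hC) = g :=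
    (orderEmbOfFin_unique (card_compl_eq hC) (fun j => by simp [C]) hg).symm
  set T := univ.filter fun j => g j ∈ univ.image f
  have hcover : coverSet C hC T = univ.image f := by
    ext u
    by_cases hu : u ∈ univ.image g
    · obtain ⟨j, -, rfl⟩ := mem_image.1 hu
      rw [← hgC, enumCompl_mem_coverSet]
      simp [T, hgC]
    · have huC : u ∈ C := mem_compl.2 hu
      obtain ⟨j, rfl⟩ := hτ u
      induction j using Fin.addCases with
      | left k => simpa [coverSet, huC] using ⟨k, rfl⟩
      | right k => exact absurd (mem_image_of_mem g (mem_univ k)) hu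
  have hT : T.card = m - i := by
    have := card_union_of_disjoint (disjoint_map_enumCompl hC T)
    rw [← coverSet, hcover, card_image_of_injective _ hf.injective, card_map, hC] at this
    simp at this
    omega
  refine ⟨(⟨C, hC⟩, ⟨T, hT⟩), Subtype.ext ?_⟩
  have hfC : ⇑((coverSet C hC T).orderEmbOfFin (card_coverSet hC hi hT)) = f :=
    (orderEmbOfFin_unique _ (fun j => by simp [hcover]) hf).symm
  simp only [ofFinsets, hfC, hgC, f, g]
  exact Fin.append_castAdd_natAdd

theorem card (hi : i ≤ m) :
    Nat.card (QuasiShuffle m n (n + i)) = (n + i).choose i * n.choose (m - i) := by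
  rw [← Nat.card_congr (Equiv.ofBijective _ ⟨ofFinsets_injective hi, ofFinsets_surjective hi⟩),
    Nat.card_prod, Nat.card_eq_fintype_card, Nat.card_eq_fintype_card,
    Fintype.card_finset_len, Fintype.card_finset_len, Fintype.card_fin, Fintype.card_fin]

end QuasiShuffle

section Generic

variable {N K : ℕ}

theorem card_range_comp_surjective {β : Type*} {w : Fin K → β} (hw : Function.Injective w)
    {τ : Fin N → Fin K} (hτ : Function.Surjective τ) : Nat.card (Set.range (w ∘ τ)) = K := by
  rw [hτ.range_comp, Nat.card_range_of_injective hw, Nat.card_eq_fintype_card, Fintype.card_fin]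

theorem graphOn_comp {Q : Type*} (D : Set (Fin N → Q)) (σ : Fin K → Fin N) :
    graphOn D (· ∘ σ) = (· ∘ Fin.append id σ) '' D := by
  ext z
  simp only [graphOn, Fin.comp_append, Function.comp_id, Set.mem_image, eq_comm]
  rfl

end Generic

section Tuples

variable {Q : Type*} [LinearOrder Q] {N K : ℕ}

def strictAntiTuples (U : Set Q) (K : ℕ) : Set (Fin K → Q) :=
  {w | StrictAnti w ∧ ∀ k, w k ∈ U}

theorem definable_strictAntiTuples {A U : Set Q} (hU : A.Definable₁ Language.order U) :
    A.Definable Language.order (strictAntiTuples U K) :=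
  (definable_setOf_strictAnti K).inter (definable_setOf_forall_mem hU)

theorem exists_strictAnti_comp_surjective (z : Fin N → Q) :
    ∃ (K : ℕ) (w : Fin K → Q) (τ : Fin N → Fin K),
      StrictAnti w ∧ Function.Surjective τ ∧ w ∘ τ = z := by
  classical
  set V := Finset.univ.image z
  let e := V.orderIsoOfFin rfl
  refine ⟨V.card, fun k => e k.rev, fun j => (e.symm ⟨z j, by simp [V]⟩).rev, ?_, ?_, ?_⟩
  · exact fun k l hkl => e.strictMono (Fin.rev_lt_rev.2 hkl)
  · intro k
    obtain ⟨j, -, hj⟩ := Finset.mem_image.1 (e k.rev).2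
    exact ⟨j, by simp [hj]⟩
  · funext j
    simp

theorem strictMono_of_strictAnti_comp {w : Fin K → Q} (hw : StrictAnti w) {f : Fin N → Fin K}
    (h : StrictAnti (w ∘ f)) : StrictMono f :=
  fun _ _ hab => hw.lt_iff_gt.1 (h hab)

theorem eq_of_strictAnti_comp_eq {w w' : Fin K → Q} {τ τ' : Fin N → Fin K} (hw : StrictAnti w)
    (hw' : StrictAnti w') (hτ : Function.Surjective τ) (hτ' : Function.Surjective τ')
    (h : w ∘ τ = w' ∘ τ') : τ = τ' := by
  obtain rfl : w = w' := (hw.range_inj hw').1 (by rw [← hτ.range_comp, h, hτ'.range_comp])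
  exact funext fun j => hw.injective (congrFun h j)

theorem defBij_image_comp {A : Set Q} (hA : A.Finite) {D : Set (Fin K → Q)}
    (hD : A.Definable Language.order D) {τ : Fin N → Fin K} (hτ : Function.Surjective τ) :
    DefBij ((· ∘ τ) '' D) D := by
  have hτσ : τ ∘ Function.surjInv hτ = id := funext (Function.surjInv_eq hτ)
  refine ⟨(· ∘ Function.surjInv hτ), Set.InvOn.bijOn ⟨?_, ?_⟩ ?_ fun w hw => ⟨w, hw, rfl⟩,
    A, hA, ?_⟩
  · rintro _ ⟨w, -, rfl⟩
    simp [Function.comp_assoc, hτσ]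
  · intro w _
    simp [Function.comp_assoc, hτσ]
  · rintro _ ⟨w, hw, rfl⟩
    simpa [Function.comp_assoc, hτσ]
  · rw [graphOn_comp]
    exact (hD.image_comp τ).image_comp _

variable {U : Set Q} {m n : ℕ}

theorem comp_mem_pairSet (τ : QuasiShuffle m n K) {w : Fin K → Q}
    (hw : w ∈ strictAntiTuples U K) :
    w ∘ τ.1 ∈ pairSet (strictAntiTuples U m) (strictAntiTuples U n) :=
  ⟨w ∘ τ.1 ∘ Fin.castAdd n, ⟨hw.1.comp_strictMono τ.2.2.1, fun _ => hw.2 _⟩,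
    w ∘ τ.1 ∘ Fin.natAdd m, ⟨hw.1.comp_strictMono τ.2.2.2, fun _ => hw.2 _⟩,
    Fin.append_castAdd_natAdd.symm⟩

theorem exists_quasiShuffle {x : Fin m → Q} {y : Fin n → Q} (hx : x ∈ strictAntiTuples U m)
    (hy : y ∈ strictAntiTuples U n) :
    ∃ (i : Fin (m + 1)) (τ : QuasiShuffle m n (n + i)),
      ∃ w ∈ strictAntiTuples U (n + i), w ∘ τ.1 = Fin.append x y := by
  obtain ⟨K, w, τ, hw, hτ, hz⟩ := exists_strictAnti_comp_surjective (Fin.append x y)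
  have hf : StrictMono (τ ∘ Fin.castAdd n) := strictMono_of_strictAnti_comp hw <| by
    rw [← Function.comp_assoc, hz, Fin.append_comp_castAdd_s9]; exact hx.1
  have hg : StrictMono (τ ∘ Fin.natAdd m) := strictMono_of_strictAnti_comp hw <| by
    rw [← Function.comp_assoc, hz, Fin.append_comp_natAdd_s9]; exact hy.1
  have hnK : n ≤ K := by simpa using Fintype.card_le_of_injective _ hg.injective
  have hKmn : K ≤ m + n := by simpa using Fintype.card_le_of_surjective _ hτ
  obtain ⟨i, rfl⟩ : ∃ i, K = n + i := ⟨K - n, by omega⟩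
  refine ⟨⟨i, by omega⟩, ⟨τ, hτ, hf, hg⟩, w, ⟨hw, fun k => ?_⟩, hz⟩
  obtain ⟨j, rfl⟩ := hτ k
  rw [← Function.comp_apply (f := w), hz]
  induction j using Fin.addCases <;> simp [hx.2, hy.2]

theorem exists_partition_pairSet_strictAntiTuples {A : Set Q} (hA : A.Finite)
    (hU : A.Definable₁ Language.order U) (m n : ℕ) :
    ∃ parts : (Σ i : Fin (m + 1), Fin ((n + i).choose i * n.choose (m - i))) →
        Set (Fin (m + n) → Q),
      (∀ p q, p ≠ q → Disjoint (parts p) (parts q)) ∧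
      (⋃ p, parts p) = pairSet (strictAntiTuples U m) (strictAntiTuples U n) ∧
      ∀ p, DLODefinable (parts p) ∧ DefBij (parts p) (strictAntiTuples U (n + p.1)) := by
  let shuffle (i : Fin (m + 1)) : Fin ((n + i).choose i * n.choose (m - i)) ≃
      QuasiShuffle m n (n + i) :=
    (Finite.equivFinOfCardEq (QuasiShuffle.card i.is_le)).symm
  refine ⟨fun p => (· ∘ (shuffle p.1 p.2).1) '' strictAntiTuples U (n + p.1), ?_, ?_,
    fun p => ⟨⟨A, hA, (definable_strictAntiTuples hU).image_comp _⟩,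
      defBij_image_comp hA (definable_strictAntiTuples hU) (shuffle p.1 p.2).2.1⟩⟩
  · rintro ⟨i, k⟩ ⟨i', k'⟩ hne
    refine Set.disjoint_left.2 ?_
    rintro _ ⟨w, hw, rfl⟩ ⟨w', hw', h⟩
    dsimp only at hw hw' h
    have hcard := card_range_comp_surjective hw.1.injective (shuffle i k).2.1
    rw [← h, card_range_comp_surjective hw'.1.injective (shuffle i' k').2.1] at hcard
    obtain rfl : i = i' := Fin.ext (by simpa using hcard.symm)
    have hτ := eq_of_strictAnti_comp_eq hw'.1 hw.1 (shuffle i k').2.1 (shuffle i k).2.1 h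
    exact hne (congrArg _ ((shuffle i).injective (Subtype.ext hτ)).symm)
  · rw [Set.iUnion_sigma]
    refine subset_antisymm (Set.iUnion₂_subset fun i k => ?_) ?_
    · rintro _ ⟨w, hw, rfl⟩
      exact comp_mem_pairSet _ hw
    · rintro _ ⟨x, hx, y, hy, rfl⟩
      obtain ⟨i, τ, w, hw, h⟩ := exists_quasiShuffle hx hy
      exact Set.mem_iUnion₂.2 ⟨i, (shuffle i).symm τ, w, hw, by simpa using h⟩

end Tuples

theorem dlo_relatedSet_product_decomposition_general {Q : Type*} [LinearOrder Q] (a : Q) (m n : ℕ) :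
    (∃ parts : (Σ i : Fin (m + 1), Fin (Nat.choose (n + (i : ℕ)) (i : ℕ) *
          Nat.choose n (m - (i : ℕ)))) → Set (Fin (m + n) → Q),
        (∀ p q, p ≠ q → Disjoint (parts p) (parts q)) ∧
        (⋃ p, parts p) = pairSet (Rset a m) (Rset a n) ∧
        ∀ p, DLODefinable (parts p) ∧ DefBij (parts p) (Rset a (n + (p.1 : ℕ)))) ∧
    (∃ parts : (Σ i : Fin (m + 1), Fin (Nat.choose (n + (i : ℕ)) (i : ℕ) *
          Nat.choose n (m - (i : ℕ)))) → Set (Fin (m + n) → Q),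
        (∀ p q, p ≠ q → Disjoint (parts p) (parts q)) ∧
        (⋃ p, parts p) = pairSet (RsetUnb Q m) (RsetUnb Q n) ∧
        ∀ p, DLODefinable (parts p) ∧ DefBij (parts p) (RsetUnb Q (n + (p.1 : ℕ)))) := by
  have hR : ∀ K, Rset a K = strictAntiTuples (Set.Ioi a) K := fun _ => rfl
  have hRU : ∀ K, RsetUnb Q K = strictAntiTuples Set.univ K := fun _ => by
    ext; simp [RsetUnb, strictAntiTuples]
  simp only [hR, hRU]
  exact ⟨exists_partition_pairSet_strictAntiTuples (Set.finite_singleton a) (definable₁_Ioi a) m n,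
    exists_partition_pairSet_strictAntiTuples Set.finite_empty
      (by simp [Set.Definable₁, Set.definable_univ]) m n⟩

/-- For `1 ≤ m ≤ n`, the product `ᵃR_m × ᵃR_n` admits a finite partition into pairwise
disjoint definable sets in which, for each `0 ≤ i ≤ m`, exactly
`binom (n+i) i * binom n (m-i)` parts are in definable bijection with `ᵃR_{n+i}`, these
accounting for all parts; similarly for the unbounded sets `R_j`. -/
theorem dlo_relatedSet_product_decomposition {Q : Type*} [LinearOrder Q] [DenselyOrdered Q]
    [NoMinOrder Q] [NoMaxOrder Q] [Nonempty Q] (a : Q) (m n : ℕ) (hm : 1 ≤ m) (hmn : m ≤ n) :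
    (∃ parts : (Σ i : Fin (m + 1), Fin (Nat.choose (n + (i : ℕ)) (i : ℕ) *
          Nat.choose n (m - (i : ℕ)))) → Set (Fin (m + n) → Q),
        (∀ p q, p ≠ q → Disjoint (parts p) (parts q)) ∧
        (⋃ p, parts p) = pairSet (Rset a m) (Rset a n) ∧
        ∀ p, DLODefinable (parts p) ∧ DefBij (parts p) (Rset a (n + (p.1 : ℕ)))) ∧
    (∃ parts : (Σ i : Fin (m + 1), Fin (Nat.choose (n + (i : ℕ)) (i : ℕ) *
          Nat.choose n (m - (i : ℕ)))) → Set (Fin (m + n) → Q),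
        (∀ p q, p ≠ q → Disjoint (parts p) (parts q)) ∧
        (⋃ p, parts p) = pairSet (RsetUnb Q m) (RsetUnb Q n) ∧
        ∀ p, DLODefinable (parts p) ∧ DefBij (parts p) (RsetUnb Q (n + (p.1 : ℕ)))) :=
  dlo_relatedSet_product_decomposition_general a m n
end
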